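/- arXiv:1904.06824 — 4 statements merged into one kernel-verified Lean document; each statement's English description precedes it below -/
import Mathlib

section
/- Let A in R_+^{q×d} be a deterministic matrix with all rows non-trivial, and fix i in {1,…,d} and k in {1,…,q}. If the pre-image A^{-1}(E_q^{(k)}) = {z ∈ R_+^d : Az ∈ E_q^{(k)}} is contained in E_d^{(i)}, then 0 < τ_{q,d}^{(k,i)}(A) < ∞. -/
open Matrix Finset ENNReal

/-- The `k`-th largest component (0-indexed: `k = 0` is the maximum) of a vector. -/
noncomputable def ordStat {m : ℕ} (v : Fin m → ℝ) (k : Fin m) : ℝ :=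
  v (Tuple.sort v k.rev)

/-- The cone `E_d^{(i)}` (0-indexed `i`): nonnegative vectors whose `(i+1)`-th largest
component is positive. -/
def Epos {d : ℕ} (i : Fin d) : Set (Fin d → ℝ) :=
  {z | (∀ j, 0 ≤ z j) ∧ 0 < ordStat z i}

/-- `τ_{q,d}^{(k,i)}(A)` (0-indexed `k`, `i`), valued in `[0,∞]`. -/
noncomputable def tauM {q d : ℕ} (A : Matrix (Fin q) (Fin d) ℝ) (k : Fin q) (i : Fin d) :
    ℝ≥0∞ :=
  ⨆ z ∈ Epos i, ENNReal.ofReal (ordStat (A.mulVec z) k / ordStat z i)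

/-- At least `k+1` components of `v` are `≥ ordStat v k`. -/
lemma aux_card_ge {m : ℕ} (v : Fin m → ℝ) (k : Fin m) :
    (k : ℕ) + 1 ≤ (Finset.univ.filter (fun l => ordStat v k ≤ v l)).card := by
  have hmono := Tuple.monotone_sort v
  have hIci : (Finset.Ici k.rev).card = (k : ℕ) + 1 := by
    rw [Fin.card_Ici, Fin.val_rev]
    have := k.isLt
    omega
  rw [← hIci]
  refine Finset.card_le_card_of_injOn (fun t => Tuple.sort v t) ?_ ?_
  · intro t ht
    simp only [Finset.mem_coe, Finset.mem_Ici] at ht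
    simp only [Finset.mem_coe, Finset.mem_filter, Finset.mem_univ, true_and]
    exact hmono ht
  · exact (Equiv.injective _).injOn

/-- At most `k` components of `v` are `> ordStat v k`. -/
lemma aux_card_le {m : ℕ} (v : Fin m → ℝ) (k : Fin m) :
    (Finset.univ.filter (fun l => ordStat v k < v l)).card ≤ (k : ℕ) := by
  have hmono := Tuple.monotone_sort v
  have hIoi : (Finset.Ioi k.rev).card = (k : ℕ) := by
    rw [Fin.card_Ioi, Fin.val_rev]
    have := k.isLt
    omega
  rw [← hIoi]
  refine Finset.card_le_card_of_injOn (fun l => (Tuple.sort v).symm l) ?_ ?_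
  · intro l hl
    simp only [Finset.mem_coe, Finset.mem_filter, Finset.mem_univ, true_and] at hl
    simp only [Finset.mem_coe, Finset.mem_Ioi]
    by_contra hle
    push_neg at hle
    have : v (Tuple.sort v ((Tuple.sort v).symm l)) ≤ v (Tuple.sort v k.rev) := hmono hle
    rw [Equiv.apply_symm_apply] at this
    exact absurd this (not_le.2 hl)
  · exact (Equiv.injective _).injOn

/-- If more than `k` components of `v` exceed `c`, then `ordStat v k > c`. -/
lemma aux_lt_ordStat {m : ℕ} (v : Fin m → ℝ) (k : Fin m) (c : ℝ)
    (h : (k : ℕ) + 1 ≤ (Finset.univ.filter (fun l => c < v l)).card) :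
    c < ordStat v k := by
  by_contra hc
  push_neg at hc
  have hsub : (Finset.univ.filter (fun l => c < v l)) ⊆
      (Finset.univ.filter (fun l => ordStat v k < v l)) := by
    intro l hl
    simp only [Finset.mem_filter, Finset.mem_univ, true_and] at hl ⊢
    exact lt_of_le_of_lt hc hl
  have := Finset.card_le_card hsub
  have := aux_card_le v k
  omega

/-- Lemma 3.4, (a) ⇒ (b): if `A` has no trivial row and `A^{-1}(E_q^{(k)}) ⊆ E_d^{(i)}`,
then `0 < τ_{q,d}^{(k,i)}(A) < ∞`. -/
theorem stmt6 {q d : ℕ} (A : Matrix (Fin (q+1)) (Fin (d+1)) ℝ)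
    (hA : ∀ r j, 0 ≤ A r j) (hrows : ∀ r, ∃ j, 0 < A r j)
    (i : Fin (d+1)) (k : Fin (q+1))
    (hpre : {z : Fin (d+1) → ℝ | (∀ j, 0 ≤ z j) ∧ A.mulVec z ∈ Epos k} ⊆ Epos i) :
    0 < tauM A k i ∧ tauM A k i < ⊤ := by
  set M : ℝ := ∑ r, ∑ j, A r j with hM
  have hrowM : ∀ r, ∑ j, A r j ≤ M := by
    intro r
    exact Finset.single_le_sum (f := fun r => ∑ j, A r j)
      (fun r _ => Finset.sum_nonneg fun j _ => hA r j) (Finset.mem_univ r)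
  have hM0 : 0 ≤ M :=
    Finset.sum_nonneg fun r _ => Finset.sum_nonneg fun j _ => hA r j
  constructor
  · -- positivity: use the all-ones vector
    set o : Fin (d+1) → ℝ := fun _ => 1 with ho
    have hoE : o ∈ Epos i := ⟨fun _ => zero_le_one, by
      show (0:ℝ) < ordStat o i
      unfold ordStat
      exact one_pos⟩
    have hAo : ∀ r, 0 < A.mulVec o r := by
      intro r
      obtain ⟨j, hj⟩ := hrows r
      unfold Matrix.mulVec dotProduct
      refine Finset.sum_pos' (fun j' _ => mul_nonneg (hA r j') zero_le_one) ?_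
      exact ⟨j, Finset.mem_univ j, by simpa [ho] using hj⟩
    have hpos : 0 < ordStat (A.mulVec o) k := hAo _
    have hterm : (0:ℝ≥0∞) < ENNReal.ofReal (ordStat (A.mulVec o) k / ordStat o i) := by
      refine ENNReal.ofReal_pos.2 ?_
      have : ordStat o i = 1 := rfl
      rw [this, div_one]
      exact hpos
    refine lt_of_lt_of_le hterm ?_
    exact le_iSup₂_of_le o hoE le_rfl
  · -- finiteness
    have key : ∀ z ∈ Epos i, ordStat (A.mulVec z) k ≤ M * ordStat z i := by
      intro z hz
      obtain ⟨hz0, ha⟩ := hz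
      set a : ℝ := ordStat z i with haa
      by_contra hcon
      push_neg at hcon
      set zB : Fin (d+1) → ℝ := fun j => if a < z j then z j else 0 with hzB
      have hzB0 : ∀ j, 0 ≤ zB j := by
        intro j; simp only [hzB]; split <;> [exact hz0 j; exact le_rfl]
      -- the difference z - zB has all entries in [0, a]
      have hdiff : ∀ j, z j - zB j ≤ a := by
        intro j; simp only [hzB]; split
        · simpa using ha.le
        · simp only [sub_zero]; exact le_of_not_gt (by assumption)
      -- bound: A (z - zB) ≤ M * a componentwise
      have hAdiff : ∀ r, A.mulVec z r - A.mulVec zB r ≤ M * a := by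
        intro r
        unfold Matrix.mulVec dotProduct
        rw [← Finset.sum_sub_distrib]
        calc ∑ j, (A r j * z j - A r j * zB j) = ∑ j, A r j * (z j - zB j) := by
              apply Finset.sum_congr rfl; intro j _; ring
          _ ≤ ∑ j, A r j * a := by
              refine Finset.sum_le_sum fun j _ => ?_
              exact mul_le_mul_of_nonneg_left (hdiff j) (hA r j)
          _ = (∑ j, A r j) * a := by rw [← Finset.sum_mul]
          _ ≤ M * a := mul_le_mul_of_nonneg_right (hrowM r) ha.le
      -- every row with (Az)_r ≥ ordStat (Az) k has (A zB)_r > 0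
      have hAzB : ∀ r, ordStat (A.mulVec z) k ≤ A.mulVec z r → 0 < A.mulVec zB r := by
        intro r hr
        have h1 : M * a < A.mulVec z r := lt_of_lt_of_le hcon hr
        have h2 := hAdiff r
        linarith
      -- so at least k+1 components of A zB are positive
      have hcard : (k : ℕ) + 1 ≤
          (Finset.univ.filter (fun r => (0:ℝ) < A.mulVec zB r)).card := by
        refine le_trans (aux_card_ge (A.mulVec z) k) (Finset.card_le_card ?_)
        intro r hr
        simp only [Finset.mem_filter, Finset.mem_univ, true_and] at hr ⊢
        exact hAzB r hr
      have hOB : 0 < ordStat (A.mulVec zB) k := aux_lt_ordStat _ _ _ hcard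
      have hAzB0 : ∀ r, 0 ≤ A.mulVec zB r := by
        intro r
        unfold Matrix.mulVec dotProduct
        exact Finset.sum_nonneg fun j _ => mul_nonneg (hA r j) (hzB0 j)
      -- zB is in the preimage set, hence in Epos i
      have hzBE : zB ∈ Epos i := hpre ⟨hzB0, hAzB0, hOB⟩
      -- so zB has at least i+1 positive components
      have hc1 : (i : ℕ) + 1 ≤
          (Finset.univ.filter (fun l => (0:ℝ) < zB l)).card := by
        refine le_trans (aux_card_ge zB i) (Finset.card_le_card ?_)
        intro l hl
        simp only [Finset.mem_filter, Finset.mem_univ, true_and] at hl ⊢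
        exact lt_of_lt_of_le hzBE.2 hl
      -- but positive components of zB have z l > a, and there are at most i of those
      have hc2 : (Finset.univ.filter (fun l => (0:ℝ) < zB l)).card ≤ (i : ℕ) := by
        refine le_trans (Finset.card_le_card ?_) (aux_card_le z i)
        intro l hl
        simp only [Finset.mem_filter, Finset.mem_univ, true_and, hzB] at hl ⊢
        by_contra hla
        split_ifs at hl with h'
        · exact absurd h' hla
        exact lt_irrefl 0 hl
      omega
    have hle : tauM A k i ≤ ENNReal.ofReal M := by
      refine iSup₂_le fun z hz => ?_
      refine ENNReal.ofReal_le_ofReal ?_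
      rw [div_le_iff₀ hz.2]
      exact key z hz
    exact lt_of_le_of_lt hle ENNReal.ofReal_lt_top
end

section
/- Let A in R_+^{q×d} be a deterministic matrix with all rows non-trivial, and fix i in {1,…,d} and k in {1,…,q}. If 0 < τ_{q,d}^{(k,i)}(A) < ∞, then the pre-image A^{-1}(E_q^{(k)}) = {z ∈ R_+^d : Az ∈ E_q^{(k)}} is contained in E_d^{(i)}. -/
open Matrix Finset ENNReal

/-- Sorted values are monotone in the vector (pointwise order). -/
lemma sorted_mono {m : ℕ} {v w : Fin m → ℝ} (h : ∀ j, v j ≤ w j) (j : Fin m) :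
    v (Tuple.sort v j) ≤ w (Tuple.sort w j) := by
  set σ := Tuple.sort v
  set τ := Tuple.sort w
  -- pigeonhole: some index m₀ = σ l with j ≤ l has τ⁻¹ m₀ ≤ j
  have key : ∃ l : Fin m, j ≤ l ∧ τ.symm (σ l) ≤ j := by
    by_contra hcon
    push_neg at hcon
    -- then τ.symm ∘ σ maps Ici j injectively into Ioi j
    have hsub : (Finset.Ici j).image (fun l => τ.symm (σ l)) ⊆ Finset.Ioi j := by
      intro x hx
      simp only [Finset.mem_image, Finset.mem_Ici] at hx
      obtain ⟨l, hl, rfl⟩ := hx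
      exact Finset.mem_Ioi.2 (hcon l hl)
    have hcard : (Finset.Ici j).card ≤ (Finset.Ioi j).card := by
      calc (Finset.Ici j).card
          = ((Finset.Ici j).image (fun l => τ.symm (σ l))).card :=
            (Finset.card_image_of_injOn (fun a _ b _ hab =>
              σ.injective (τ.symm.injective hab))).symm
        _ ≤ (Finset.Ioi j).card := Finset.card_le_card hsub
    rw [Fin.card_Ici, Fin.card_Ioi] at hcard
    have hj : (j : ℕ) < m := j.isLt
    omega
  obtain ⟨l, hjl, hlj⟩ := key
  calc v (σ j) ≤ v (σ l) := Tuple.monotone_sort v hjl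
    _ ≤ w (σ l) := h _
    _ = w (τ (τ.symm (σ l))) := by rw [Equiv.apply_symm_apply]
    _ ≤ w (τ j) := Tuple.monotone_sort w hlj

lemma ordStat_mono {m : ℕ} {v w : Fin m → ℝ} (h : ∀ j, v j ≤ w j) (k : Fin m) :
    ordStat v k ≤ ordStat w k := sorted_mono h k.rev

/-- Shift lemma: adding a constant shifts each order statistic. -/
lemma ordStat_add_const {m : ℕ} (v : Fin m → ℝ) (c : ℝ) (k : Fin m) :
    ordStat (fun j => v j + c) k = ordStat v k + c := by
  set g : Fin m → ℝ := fun j => v j + c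
  have h1 : Monotone (g ∘ Tuple.sort v) := by
    intro a b hab
    exact add_le_add_left (Tuple.monotone_sort v hab) c
  have h2 : Monotone (g ∘ Tuple.sort g) := Tuple.monotone_sort g
  have := Tuple.unique_monotone h2 h1
  have hk := congrFun this k.rev
  simp only [Function.comp_apply] at hk
  simpa [ordStat, g] using hk

/-- Lemma 3.4, (b) ⇒ (a): if `A` has no trivial row and `0 < τ_{q,d}^{(k,i)}(A) < ∞`,
then `A^{-1}(E_q^{(k)}) ⊆ E_d^{(i)}`. -/
theorem stmt7 {q d : ℕ} (A : Matrix (Fin (q+1)) (Fin (d+1)) ℝ)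
    (hA : ∀ r j, 0 ≤ A r j) (hrows : ∀ r, ∃ j, 0 < A r j)
    (i : Fin (d+1)) (k : Fin (q+1))
    (h0 : 0 < tauM A k i) (hfin : tauM A k i < ⊤) :
    {z : Fin (d+1) → ℝ | (∀ j, 0 ≤ z j) ∧ A.mulVec z ∈ Epos k} ⊆ Epos i := by
  intro z hz
  obtain ⟨hznn, hAzE⟩ := hz
  obtain ⟨hAznn, hAzpos⟩ := hAzE
  by_contra hnot
  -- z ∉ Epos i means ordStat z i ≤ 0; nonnegativity gives = 0
  have hzi0 : ordStat z i = 0 := by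
    have h1 : ¬ 0 < ordStat z i := fun h => hnot ⟨hznn, h⟩
    have h2 : 0 ≤ ordStat z i := hznn _
    linarith [not_lt.1 h1]
  set M : ℝ := ordStat (A.mulVec z) k with hM
  have hMpos : 0 < M := hAzpos
  set T : ℝ := (tauM A k i).toReal with hT
  have hTnn : 0 ≤ T := ENNReal.toReal_nonneg
  set c : ℝ := M / (T + 1) with hc
  have hcpos : 0 < c := div_pos hMpos (by linarith)
  set z' : Fin (d+1) → ℝ := fun j => z j + c with hz'
  have hz'nn : ∀ j, 0 ≤ z' j := fun j => add_nonneg (hznn j) hcpos.le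
  have hz'i : ordStat z' i = c := by
    rw [hz', ordStat_add_const, hzi0, zero_add]
  have hz'E : z' ∈ Epos i := ⟨hz'nn, by rw [hz'i]; exact hcpos⟩
  -- A z' ≥ A z pointwise
  have hAz' : ∀ r, A.mulVec z r ≤ A.mulVec z' r := by
    intro r
    simp only [Matrix.mulVec, dotProduct]
    apply Finset.sum_le_sum
    intro j _
    have hle : z j ≤ z' j := by simp [hz', hcpos.le]
    exact mul_le_mul_of_nonneg_left hle (hA r j)
  have hkey : M ≤ ordStat (A.mulVec z') k := ordStat_mono hAz' k
  -- the ratio exceeds T, contradiction with sup ≤ tauM A k i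
  have hratio : T + 1 ≤ ordStat (A.mulVec z') k / ordStat z' i := by
    rw [hz'i, le_div_iff₀ hcpos]
    calc (T + 1) * c = M := by
          rw [hc]; field_simp
      _ ≤ ordStat (A.mulVec z') k := hkey
  have hle : ENNReal.ofReal (ordStat (A.mulVec z') k / ordStat z' i) ≤ tauM A k i := by
    rw [tauM]
    exact le_iSup_of_le z' (le_iSup_of_le hz'E le_rfl)
  have h1 : ENNReal.ofReal (T + 1) ≤ tauM A k i :=
    le_trans (ENNReal.ofReal_le_ofReal hratio) hle
  have h2 : tauM A k i = ENNReal.ofReal T := (ENNReal.ofReal_toReal hfin.ne).symm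
  rw [h2] at h1
  have h3 : T + 1 ≤ T := by
    have := (ENNReal.ofReal_le_ofReal_iff hTnn).1 h1
    linarith
  linarith
end

section
/- Let A be the 4×4 matrix with rows (1,1,1,0), (1,1,0,1), (1,0,1,1), (0,1,1,1). Then τ_{4,4}^{(4,1)}(A) = 3 and τ_{4,4}^{(4,2)}(A) = 3, while τ_{4,4}^{(4,3)}(A) = ∞. -/
open Matrix Finset ENNReal

lemma ordStat_eq_of_monotone {m : ℕ} (v : Fin m → ℝ) (σ : Equiv.Perm (Fin m))
    (h : Monotone (v ∘ σ)) (k : Fin m) : ordStat v k = v (σ k.rev) := by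
  have := (Tuple.comp_sort_eq_comp_iff_monotone (f := v) (σ := σ)).mpr h
  have := congrFun this k.rev
  simpa [ordStat] using this.symm

lemma ordStat_min (v : Fin 4 → ℝ) (j : Fin 4) : ordStat v 3 ≤ v j := by
  obtain ⟨t, rfl⟩ := (Tuple.sort v).surjective j
  have : (3 : Fin 4).rev = 0 := by decide
  rw [ordStat, this]
  exact Tuple.monotone_sort v (Fin.zero_le t)

abbrev A₀ : Matrix (Fin 4) (Fin 4) ℝ := !![1, 1, 1, 0; 1, 1, 0, 1; 1, 0, 1, 1; 0, 1, 1, 1]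

lemma mulVec_eq (z : Fin 4 → ℝ) (j : Fin 4) :
    A₀.mulVec z j = (z 0 + z 1 + z 2 + z 3) - z j.rev := by
  fin_cases j <;> simp [Matrix.mulVec, dotProduct, Fin.sum_univ_four, Fin.rev] <;> ring

-- key upper bound
lemma key (z : Fin 4 → ℝ) :
    ordStat (A₀.mulVec z) 3 ≤ z (Tuple.sort z 0) + z (Tuple.sort z 1) + z (Tuple.sort z 2) := by
  set σ := Tuple.sort z with hσ
  have h1 : ordStat (A₀.mulVec z) 3 ≤ A₀.mulVec z (σ 3).rev := ordStat_min _ _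
  rw [mulVec_eq, Fin.rev_rev] at h1
  have hs : z 0 + z 1 + z 2 + z 3 = z (σ 0) + z (σ 1) + z (σ 2) + z (σ 3) := by
    have := Equiv.sum_comp σ z
    simp [Fin.sum_univ_four] at this
    linarith
  linarith

lemma ord0 (z : Fin 4 → ℝ) : ordStat z 0 = z (Tuple.sort z 3) := by
  have : (0 : Fin 4).rev = 3 := by decide
  rw [ordStat, this]

lemma ord1 (z : Fin 4 → ℝ) : ordStat z 1 = z (Tuple.sort z 2) := by
  have : (1 : Fin 4).rev = 2 := by decide
  rw [ordStat, this]

lemma sort_mono (z : Fin 4 → ℝ) {a b : Fin 4} (h : a ≤ b) :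
    z (Tuple.sort z a) ≤ z (Tuple.sort z b) := Tuple.monotone_sort z h

lemma epos_one (i : Fin 4) : (fun _ => (1:ℝ)) ∈ Epos i := by
  constructor
  · intro j; norm_num
  · simp [ordStat]

lemma tau_ge_three (i : Fin 4) : (3 : ℝ≥0∞) ≤ tauM A₀ 3 i := by
  have hz := epos_one i
  have hv : A₀.mulVec (fun _ => (1:ℝ)) = fun _ => (3:ℝ) := by
    funext j; rw [mulVec_eq]; norm_num
  have hval : ENNReal.ofReal (ordStat (A₀.mulVec fun _ => (1:ℝ)) 3 / ordStat (fun _ => (1:ℝ)) i)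
      = 3 := by
    rw [hv]
    simp [ordStat]
  calc (3:ℝ≥0∞) = _ := hval.symm
    _ ≤ tauM A₀ 3 i := le_iSup₂ (f := fun z (_ : z ∈ Epos i) =>
        ENNReal.ofReal (ordStat (A₀.mulVec z) 3 / ordStat z i)) _ hz

lemma tau_le_three (i : Fin 4) (hi : i = 0 ∨ i = 1) : tauM A₀ 3 i ≤ 3 := by
  apply iSup₂_le
  intro z hz
  have hpos := hz.2
  have hkey := key z
  have hden : z (Tuple.sort z 0) + z (Tuple.sort z 1) + z (Tuple.sort z 2)
      ≤ 3 * ordStat z i := by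
    have h01 : z (Tuple.sort z 0) ≤ z (Tuple.sort z 2) := sort_mono z (by decide)
    have h12 : z (Tuple.sort z 1) ≤ z (Tuple.sort z 2) := sort_mono z (by decide)
    have h23 : z (Tuple.sort z 2) ≤ z (Tuple.sort z 3) := sort_mono z (by decide)
    rcases hi with rfl | rfl
    · rw [ord0]; linarith
    · rw [ord1]; linarith
  have : ordStat (A₀.mulVec z) 3 / ordStat z i ≤ 3 := by
    rw [div_le_iff₀ hpos]; linarith
  calc ENNReal.ofReal (ordStat (A₀.mulVec z) 3 / ordStat z i)
      ≤ ENNReal.ofReal 3 := ENNReal.ofReal_le_ofReal this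
    _ = 3 := by norm_num [ENNReal.ofReal_ofNat]

def σ₀ : Equiv.Perm (Fin 4) := ⟨![2,3,0,1], ![2,3,0,1], by decide, by decide⟩

lemma tau_top : tauM A₀ 3 2 = ⊤ := by
  apply ENNReal.eq_top_of_forall_nnreal_le
  intro r
  set t : ℝ := max (r:ℝ) 1 with htdef
  have ht : 1 ≤ t := le_max_right _ _
  have htr : (r:ℝ) ≤ t := le_max_left _ _
  set z : Fin 4 → ℝ := ![t, t, 1, 1] with hzdef
  have hmono : Monotone (z ∘ σ₀) := by
    rw [Fin.monotone_iff_le_succ]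
    intro i
    fin_cases i <;> simp [σ₀, hzdef, Fin.castSucc, Fin.castAdd, Fin.castLE, Fin.succ] <;> linarith
  have hord2 : ordStat z 2 = 1 := by
    have := ordStat_eq_of_monotone z σ₀ hmono 2
    simpa [σ₀, hzdef] using this
  have hz : z ∈ Epos 2 := by
    refine ⟨fun j => ?_, by rw [hord2]; norm_num⟩
    fin_cases j <;> simp [hzdef] <;> linarith
  have hAv : ∀ j, A₀.mulVec z j = ![2*t+1, 2*t+1, t+2, t+2] j := by
    intro j; rw [mulVec_eq]; fin_cases j <;> simp [hzdef, Fin.rev] <;> ring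
  have hAv' : A₀.mulVec z = ![2*t+1, 2*t+1, t+2, t+2] := funext hAv
  have hmono2 : Monotone ((A₀.mulVec z) ∘ σ₀) := by
    rw [Fin.monotone_iff_le_succ]
    intro i
    fin_cases i <;> simp [σ₀, hAv', Fin.castSucc, Fin.castAdd, Fin.castLE, Fin.succ] <;> linarith
  have hord3 : ordStat (A₀.mulVec z) 3 = t + 2 := by
    have := ordStat_eq_of_monotone (A₀.mulVec z) σ₀ hmono2 3
    have h30 : (3 : Fin 4).rev = 0 := by decide
    rw [h30] at this
    simpa [σ₀, hAv'] using this
  have hval : ENNReal.ofReal (ordStat (A₀.mulVec z) 3 / ordStat z 2) = ENNReal.ofReal (t + 2) := by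
    rw [hord2, hord3]; norm_num
  calc (r : ℝ≥0∞) = ENNReal.ofReal r := (ENNReal.ofReal_coe_nnreal).symm
    _ ≤ ENNReal.ofReal (t + 2) := ENNReal.ofReal_le_ofReal (by linarith)
    _ = _ := hval.symm
    _ ≤ tauM A₀ 3 2 := le_iSup₂ (f := fun z (_ : z ∈ Epos 2) =>
        ENNReal.ofReal (ordStat (A₀.mulVec z) 3 / ordStat z 2)) _ hz

/-- Example 3.5: for the given 4×4 matrix, `τ_{4,4}^{(4,1)}(A) = τ_{4,4}^{(4,2)}(A) = 3` and
`τ_{4,4}^{(4,3)}(A) = ∞`. -/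
theorem stmt8 :
    tauM (!![1, 1, 1, 0; 1, 1, 0, 1; 1, 0, 1, 1; 0, 1, 1, 1] : Matrix (Fin 4) (Fin 4) ℝ)
        (3 : Fin 4) (0 : Fin 4) = 3 ∧
      tauM (!![1, 1, 1, 0; 1, 1, 0, 1; 1, 0, 1, 1; 0, 1, 1, 1] : Matrix (Fin 4) (Fin 4) ℝ)
        (3 : Fin 4) (1 : Fin 4) = 3 ∧
      tauM (!![1, 1, 1, 0; 1, 1, 0, 1; 1, 0, 1, 1; 0, 1, 1, 1] : Matrix (Fin 4) (Fin 4) ℝ)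
        (3 : Fin 4) (2 : Fin 4) = ⊤ :=
  ⟨le_antisymm (tau_le_three 0 (Or.inl rfl)) (tau_ge_three 0),
   le_antisymm (tau_le_three 1 (Or.inr rfl)) (tau_ge_three 1),
   tau_top⟩
end

section
/- Let Z_1, Z_2, Z_3 have joint distribution given by P(Z_1 ≤ z_1, Z_2 ≤ z_2, Z_3 ≤ z_3) = (1 + (κ_1κ_2κ_3)(z_1 z_2 z_3)^{-α}) ∏_{i=1}^3 (1 - κ_i z_i^{-α}) for z_i ≥ κ_i^{1/α} (the case ρ = θ = 1). Then the joint survival function satisfies P(Z_1 > t, Z_2 > t, Z_3 > t) = κ_1 κ_2 κ_3 (κ_1 + κ_2 + κ_3) t^{-4α} + o(t^{-4α}) as t → ∞. -/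
open MeasureTheory ProbabilityTheory Filter Finset Asymptotics Topology

lemma aux_marginal {Ω : Type*} [MeasurableSpace Ω] (μ : Measure Ω) [IsProbabilityMeasure μ]
    (Z : Fin 3 → Ω → ℝ)
    (κ : Fin 3 → ℝ) (hκ : ∀ i, 0 < κ i) (α : ℝ) (hα : 0 < α)
    (hjoint : ∀ z : Fin 3 → ℝ, (∀ i, κ i ^ (1/α) ≤ z i) →
      (μ {ω | ∀ i, Z i ω ≤ z i}).toReal =
        (1 + (κ 0 * κ 1 * κ 2) * (z 0 * z 1 * z 2) ^ (-α)) *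
          ∏ i, (1 - κ i * z i ^ (-α)))
    (t : ℝ) (ht : ∀ i, κ i ^ (1/α) ≤ t)
    (b : Fin 3 → Prop) [DecidablePred b] (hb : ¬ ∀ i, b i) :
    (μ {ω | ∀ i, b i → Z i ω ≤ t}).toReal
      = ∏ i, (if b i then 1 - κ i * t ^ (-α) else 1) := by
  have ht0 : 0 < t := lt_of_lt_of_le (Real.rpow_pos_of_pos (hκ 0) _) (ht 0)
  set z : ℕ → Fin 3 → ℝ := fun n i => if b i then t else max t n with hz
  have hz_ge : ∀ n i, κ i ^ (1/α) ≤ z n i := by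
    intro n i
    simp only [hz]
    split
    · exact ht i
    · exact le_trans (ht i) (le_max_left _ _)
  have hzt : ∀ n i, t ≤ z n i := by
    intro n i; simp only [hz]; split
    · exact le_refl t
    · exact le_max_left _ _
  set s : ℕ → Set Ω := fun n => {ω | ∀ i, Z i ω ≤ z n i} with hs
  have hmono : Monotone s := by
    intro n m hnm ω hω i
    refine le_trans (hω i) ?_
    simp only [hz]
    split
    · exact le_refl t
    · exact max_le_max (le_refl t) (Nat.cast_le.2 hnm)
  have hunion : (⋃ n, s n) = {ω | ∀ i, b i → Z i ω ≤ t} := by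
    ext ω
    simp only [Set.mem_iUnion, hs, Set.mem_setOf_eq]
    constructor
    · rintro ⟨n, hn⟩ i hbi
      have := hn i
      simp only [hz, if_pos hbi] at this
      exact this
    · intro h
      obtain ⟨n, hn⟩ := exists_nat_ge (max (Z 0 ω) (max (Z 1 ω) (Z 2 ω)))
      refine ⟨n, fun i => ?_⟩
      simp only [hz]
      split
      · exact h i ‹_›
      · refine le_trans ?_ (le_max_right t n)
        refine le_trans ?_ hn
        fin_cases i
        · exact le_max_left _ _
        · exact le_trans (le_max_left _ _) (le_max_right _ _)
        · exact le_trans (le_max_right _ _) (le_max_right _ _)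
  have h1 : Tendsto (fun n => (μ (s n)).toReal) atTop (𝓝 ((μ {ω | ∀ i, b i → Z i ω ≤ t}).toReal)) := by
    rw [← hunion]
    exact (ENNReal.tendsto_toReal (measure_ne_top μ _)).comp (tendsto_measure_iUnion_atTop hmono)
  -- rewrite values
  have hval : ∀ n, (μ (s n)).toReal =
      (1 + (κ 0 * κ 1 * κ 2) * (z n 0 * z n 1 * z n 2) ^ (-α)) *
        ∏ i, (1 - κ i * (z n i) ^ (-α)) := fun n => hjoint (z n) (hz_ge n)
  -- limit of RHS
  push_neg at hb
  obtain ⟨j, hj⟩ := hb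
  have hmaxt : Tendsto (fun n : ℕ => max t (n : ℝ)) atTop atTop :=
    tendsto_atTop_mono (fun n => le_max_right t n) tendsto_natCast_atTop_atTop
  have hprod_top : Tendsto (fun n => z n 0 * z n 1 * z n 2) atTop atTop := by
    refine tendsto_atTop_mono ?_ (hmaxt.const_mul_atTop (by positivity : (0:ℝ) < t * t))
    intro n
    have h0 := hzt n 0; have h1 := hzt n 1; have h2 := hzt n 2
    have hjle : max t (n : ℝ) ≤ z n j := by simp only [hz, if_neg hj]; exact le_refl _
    have hm : t ≤ max t (n : ℝ) := le_max_left _ _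
    have hcase : max t (n:ℝ) ≤ z n 0 ∨ max t (n:ℝ) ≤ z n 1 ∨ max t (n:ℝ) ≤ z n 2 := by
      fin_cases j
      · exact Or.inl hjle
      · exact Or.inr (Or.inl hjle)
      · exact Or.inr (Or.inr hjle)
    have key : ∀ a b c : ℝ, max t (n:ℝ) ≤ a → t ≤ b → t ≤ c → t * t * max t (n:ℝ) ≤ a * b * c := by
      intro a b c ha hb hc
      have h1' : t * t ≤ b * c := mul_le_mul hb hc ht0.le (ht0.le.trans hb)
      calc t * t * max t (n:ℝ) = max t (n:ℝ) * (t * t) := by ring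
        _ ≤ a * (b * c) := mul_le_mul ha h1' (by positivity) ((ht0.le.trans hm).trans ha)
        _ = a * b * c := by ring
    rcases hcase with h | h | h
    · exact key _ _ _ h h1 h2
    · linarith [key _ _ _ h h0 h2]
    · linarith [key _ _ _ h h0 h1]
  have hlead : Tendsto (fun n => 1 + (κ 0 * κ 1 * κ 2) * (z n 0 * z n 1 * z n 2) ^ (-α))
      atTop (𝓝 1) := by
    have : Tendsto (fun n => (z n 0 * z n 1 * z n 2) ^ (-α)) atTop (𝓝 0) :=
      (tendsto_rpow_neg_atTop hα).comp hprod_top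
    have := (this.const_mul (κ 0 * κ 1 * κ 2)).const_add 1
    simpa using this
  have hfac : ∀ i, Tendsto (fun n => 1 - κ i * (z n i) ^ (-α)) atTop
      (𝓝 (if b i then 1 - κ i * t ^ (-α) else 1)) := by
    intro i
    by_cases hbi : b i
    · simp only [hz, if_pos hbi]
      exact tendsto_const_nhds
    · simp only [hz, if_neg hbi]
      have : Tendsto (fun n : ℕ => (max t (n:ℝ)) ^ (-α)) atTop (𝓝 0) :=
        (tendsto_rpow_neg_atTop hα).comp hmaxt
      have := (this.const_mul (κ i)).const_sub 1
      simpa using this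
  have h2 : Tendsto (fun n => (μ (s n)).toReal) atTop
      (𝓝 (∏ i, (if b i then 1 - κ i * t ^ (-α) else 1))) := by
    simp only [hval]
    rw [Fin.prod_univ_three]
    have := hlead.mul (((hfac 0).mul (hfac 1)).mul (hfac 2))
    simp only [Fin.prod_univ_three]
    simpa [mul_assoc] using this
  exact tendsto_nhds_unique h1 h2


lemma aux_surv {Ω : Type*} [MeasurableSpace Ω] (μ : Measure Ω) [IsProbabilityMeasure μ]
    (Z : Fin 3 → Ω → ℝ) (hZmeas : ∀ i, Measurable (Z i))
    (κ : Fin 3 → ℝ) (hκ : ∀ i, 0 < κ i) (α : ℝ) (hα : 0 < α)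
    (hjoint : ∀ z : Fin 3 → ℝ, (∀ i, κ i ^ (1/α) ≤ z i) →
      (μ {ω | ∀ i, Z i ω ≤ z i}).toReal =
        (1 + (κ 0 * κ 1 * κ 2) * (z 0 * z 1 * z 2) ^ (-α)) *
          ∏ i, (1 - κ i * z i ^ (-α)))
    (t : ℝ) (ht : ∀ i, κ i ^ (1/α) ≤ t)
    (haux : ∀ (b : Fin 3 → Prop) (_ : DecidablePred b), (¬ ∀ i, b i) →
      (μ {ω | ∀ i, b i → Z i ω ≤ t}).toReal
        = ∏ i, (if b i then 1 - κ i * t ^ (-α) else 1)) :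
    (μ {ω | ∀ i, Z i ω > t}).toReal =
      κ 0 * t ^ (-α) * (κ 1 * t ^ (-α)) * (κ 2 * t ^ (-α)) *
        (1 - (1 - κ 0 * t ^ (-α)) * (1 - κ 1 * t ^ (-α)) * (1 - κ 2 * t ^ (-α))) := by
  have ht0 : 0 < t := lt_of_lt_of_le (Real.rpow_pos_of_pos (hκ 0) _) (ht 0)
  set A : Fin 3 → Set Ω := fun i => Z i ⁻¹' Set.Iic t with hA
  have mA : ∀ i, MeasurableSet (A i) := fun i => hZmeas i measurableSet_Iic
  set p : Fin 3 → ℝ := fun i => κ i * t ^ (-α) with hp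
  -- singles
  have hsingle : ∀ i, (μ (A i)).toReal = 1 - p i := by
    intro i
    have hb : ¬ ∀ j : Fin 3, j = i := by
      intro h
      have := (h 0).trans (h 1).symm
      simp at this
    have := haux (fun j => j = i) (fun j => instDecidableEqFin 3 j i) hb
    have hset : {ω | ∀ j, j = i → Z j ω ≤ t} = A i := by
      ext ω
      simp only [Set.mem_setOf_eq, hA, Set.mem_preimage, Set.mem_Iic]
      exact ⟨fun h => h i rfl, fun h j hj => hj ▸ h⟩
    rw [hset] at this
    rw [this, Fin.prod_univ_three]
    fin_cases i <;> simp [hp]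
  -- pairs
  have hpair : ∀ (k : Fin 3) (S : Set Ω), {ω | ∀ l, l ≠ k → Z l ω ≤ t} = S →
      (μ S).toReal = (if (0:Fin 3) ≠ k then 1 - p 0 else 1) * (if (1:Fin 3) ≠ k then 1 - p 1 else 1)
        * (if (2:Fin 3) ≠ k then 1 - p 2 else 1) := by
    intro k S hset
    have hb : ¬ ∀ l : Fin 3, l ≠ k := fun h => h k rfl
    have := haux (fun l => l ≠ k) (fun l => instDecidableNot) hb
    rw [hset] at this
    rw [this, Fin.prod_univ_three]
  have hp01 : (μ (A 0 ∩ A 1)).toReal = (1 - p 0) * (1 - p 1) := by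
    have := hpair 2 (A 0 ∩ A 1) ?_
    · rw [this, if_pos (by decide), if_pos (by decide), if_neg (by decide)]; ring
    ext ω
    simp only [Set.mem_setOf_eq, hA, Set.mem_inter_iff, Set.mem_preimage, Set.mem_Iic]
    constructor
    · intro h; exact ⟨h 0 (by decide), h 1 (by decide)⟩
    · rintro ⟨h0, h1⟩ l hl
      fin_cases l
      · exact h0
      · exact h1
      · simp at hl
  have hp02 : (μ (A 0 ∩ A 2)).toReal = (1 - p 0) * (1 - p 2) := by
    have := hpair 1 (A 0 ∩ A 2) ?_
    · rw [this, if_pos (by decide), if_neg (by decide), if_pos (by decide)]; ring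
    ext ω
    simp only [Set.mem_setOf_eq, hA, Set.mem_inter_iff, Set.mem_preimage, Set.mem_Iic]
    constructor
    · intro h; exact ⟨h 0 (by decide), h 2 (by decide)⟩
    · rintro ⟨h0, h2⟩ l hl
      fin_cases l
      · exact h0
      · simp at hl
      · exact h2
  have hp12 : (μ (A 1 ∩ A 2)).toReal = (1 - p 1) * (1 - p 2) := by
    have := hpair 0 (A 1 ∩ A 2) ?_
    · rw [this, if_neg (by decide), if_pos (by decide), if_pos (by decide)]; ring
    ext ω
    simp only [Set.mem_setOf_eq, hA, Set.mem_inter_iff, Set.mem_preimage, Set.mem_Iic]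
    constructor
    · intro h; exact ⟨h 1 (by decide), h 2 (by decide)⟩
    · rintro ⟨h1, h2⟩ l hl
      fin_cases l
      · simp at hl
      · exact h1
      · exact h2
  -- triple
  have htriple : (μ (A 0 ∩ A 1 ∩ A 2)).toReal =
      (1 + p 0 * p 1 * p 2) * ((1 - p 0) * (1 - p 1) * (1 - p 2)) := by
    have hset : {ω | ∀ i, Z i ω ≤ (fun _ : Fin 3 => t) i} = A 0 ∩ A 1 ∩ A 2 := by
      ext ω
      simp only [Set.mem_setOf_eq, hA, Set.mem_inter_iff, Set.mem_preimage, Set.mem_Iic]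
      constructor
      · intro h; exact ⟨⟨h 0, h 1⟩, h 2⟩
      · rintro ⟨⟨h0, h1⟩, h2⟩ i; fin_cases i <;> assumption
    have := hjoint (fun _ => t) (fun i => ht i)
    rw [hset, Fin.prod_univ_three] at this
    have htri : (t * t * t) ^ (-α) = t ^ (-α) * t ^ (-α) * t ^ (-α) := by
      rw [Real.mul_rpow (by positivity) ht0.le, Real.mul_rpow ht0.le ht0.le]
    rw [this, htri, hp]
    ring
  -- inclusion-exclusion
  have tr : ∀ s u : Set Ω, (μ s + μ u).toReal = (μ s).toReal + (μ u).toReal :=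
    fun s u => ENNReal.toReal_add (measure_ne_top μ s) (measure_ne_top μ u)
  have e1 := congrArg ENNReal.toReal (measure_union_add_inter (μ := μ) (A 0) (mA 1))
  rw [tr, tr] at e1
  have e2 := congrArg ENNReal.toReal (measure_union_add_inter (μ := μ) (A 0 ∪ A 1) (mA 2))
  rw [tr, tr] at e2
  have hdist : (A 0 ∪ A 1) ∩ A 2 = (A 0 ∩ A 2) ∪ (A 1 ∩ A 2) := Set.union_inter_distrib_right _ _ _
  have e3 := congrArg ENNReal.toReal (measure_union_add_inter (μ := μ) (A 0 ∩ A 2) ((mA 1).inter (mA 2)))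
  rw [tr, tr] at e3
  have hinter : (A 0 ∩ A 2) ∩ (A 1 ∩ A 2) = A 0 ∩ A 1 ∩ A 2 := by ext ω; simp only [Set.mem_inter_iff]; tauto
  rw [hinter] at e3
  rw [hdist] at e2
  -- complement
  have hcompl : {ω | ∀ i, Z i ω > t} = (A 0 ∪ A 1 ∪ A 2)ᶜ := by
    ext ω
    simp only [Set.mem_setOf_eq, Set.mem_compl_iff, Set.mem_union, hA, Set.mem_preimage,
      Set.mem_Iic, not_or, not_le]
    constructor
    · intro h; exact ⟨⟨h 0, h 1⟩, h 2⟩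
    · rintro ⟨⟨h0, h1⟩, h2⟩ i; fin_cases i <;> assumption
  have ecompl := congrArg ENNReal.toReal
    (measure_add_measure_compl (μ := μ) ((mA 0).union (mA 1) |>.union (mA 2)))
  rw [tr] at ecompl
  rw [measure_univ, ENNReal.toReal_one] at ecompl
  rw [hcompl]
  have v01 := hp01
  have v02 := hp02
  have v12 := hp12
  have w0 := hsingle 0; have w1 := hsingle 1; have w2 := hsingle 2
  have hv : (μ ((A 0 ∪ A 1 ∪ A 2)ᶜ)).toReal
      = 1 - (1 - p 0) - (1 - p 1) - (1 - p 2) + ((1 - p 0) * (1 - p 1)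
        + (1 - p 0) * (1 - p 2) + (1 - p 1) * (1 - p 2))
        - (1 + p 0 * p 1 * p 2) * ((1 - p 0) * (1 - p 1) * (1 - p 2)) := by
    rw [v01] at e1; rw [v02, v12, htriple] at e3; rw [w0, w1] at e1; rw [w2] at e2
    linarith
  rw [hv, hp]
  ring

/-- Joint survival function under the dependence structure (4.3) with `ρ = θ = 1`:
`P(Z_1 > t, Z_2 > t, Z_3 > t) = κ_1 κ_2 κ_3 (κ_1 + κ_2 + κ_3) t^{-4α} + o(t^{-4α})`. -/
theorem stmt18 {Ω : Type*} [MeasurableSpace Ω] (μ : Measure Ω) [IsProbabilityMeasure μ]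
    (Z : Fin 3 → Ω → ℝ) (hZmeas : ∀ i, Measurable (Z i))
    (κ : Fin 3 → ℝ) (hκ : ∀ i, 0 < κ i) (α : ℝ) (hα : 0 < α)
    (hjoint : ∀ z : Fin 3 → ℝ, (∀ i, κ i ^ (1/α) ≤ z i) →
      (μ {ω | ∀ i, Z i ω ≤ z i}).toReal =
        (1 + (κ 0 * κ 1 * κ 2) * (z 0 * z 1 * z 2) ^ (-α)) *
          ∏ i, (1 - κ i * z i ^ (-α))) :
    (fun t : ℝ => (μ {ω | ∀ i, Z i ω > t}).toReal -
        κ 0 * κ 1 * κ 2 * (κ 0 + κ 1 + κ 2) * t ^ (-(4 * α)))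
      =o[atTop] fun t : ℝ => t ^ (-(4 * α)) := by
  have hsurv : ∀ t : ℝ, (∀ i, κ i ^ (1/α) ≤ t) →
      (μ {ω | ∀ i, Z i ω > t}).toReal =
        κ 0 * t ^ (-α) * (κ 1 * t ^ (-α)) * (κ 2 * t ^ (-α)) *
          (1 - (1 - κ 0 * t ^ (-α)) * (1 - κ 1 * t ^ (-α)) * (1 - κ 2 * t ^ (-α))) := by
    intro t ht
    exact aux_surv μ Z hZmeas κ hκ α hα hjoint t ht
      (fun b inst hb => @aux_marginal Ω _ μ _ Z κ hκ α hα hjoint t ht b inst hb)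
  set c := κ 0 * κ 1 * κ 2 with hc
  set h : ℝ → ℝ := fun t => c * (-(κ 0 * κ 1 + κ 0 * κ 2 + κ 1 * κ 2) * t ^ (-α)
    + c * (t ^ (-α) * t ^ (-α))) with hh
  have heq : (fun t : ℝ => (μ {ω | ∀ i, Z i ω > t}).toReal -
      κ 0 * κ 1 * κ 2 * (κ 0 + κ 1 + κ 2) * t ^ (-(4 * α)))
      =ᶠ[atTop] fun t => h t * t ^ (-(4 * α)) := by
    have hM : ∀ᶠ t : ℝ in atTop,
        max (κ 0 ^ (1/α)) (max (κ 1 ^ (1/α)) (κ 2 ^ (1/α))) ≤ t := eventually_ge_atTop _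
    filter_upwards [hM] with t htM
    have ht : ∀ i, κ i ^ (1/α) ≤ t := by
      intro i
      fin_cases i
      · exact le_trans (le_max_left _ _) htM
      · exact le_trans (le_trans (le_max_left _ _) (le_max_right _ _)) htM
      · exact le_trans (le_trans (le_max_right _ _) (le_max_right _ _)) htM
    have ht0 : 0 < t := lt_of_lt_of_le (Real.rpow_pos_of_pos (hκ 0) _) (ht 0)
    rw [hsurv t ht]
    have h4 : t ^ (-(4 * α)) = (t ^ (-α)) ^ (4:ℕ) := by
      rw [← Real.rpow_natCast (t ^ (-α)) 4, ← Real.rpow_mul ht0.le]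
      norm_num
      ring_nf
    rw [h4, hh, hc]
    ring
  refine heq.trans_isLittleO ?_
  have hto : Tendsto h atTop (𝓝 0) := by
    have hx : Tendsto (fun t : ℝ => t ^ (-α)) atTop (𝓝 0) := tendsto_rpow_neg_atTop hα
    have := ((hx.const_mul (-(κ 0 * κ 1 + κ 0 * κ 2 + κ 1 * κ 2))).add
      ((hx.mul hx).const_mul c)).const_mul c
    simpa [hh] using this
  have h1 : h =o[atTop] (fun _ : ℝ => (1:ℝ)) := (isLittleO_one_iff ℝ).2 hto
  have := h1.mul_isBigO (isBigO_refl (fun t : ℝ => t ^ (-(4 * α))) atTop)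
  simpa using this
end
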